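/- The witness group B = B(X, w) is trivial if and only if w = 1 in X. -/

import Mathlib

set_option linter.unusedSectionVars false
set_option maxHeartbeats 1000000


open Monoid

section WitnessConstruction

variable (X : Type) [Group X]

/-- The generator `a` of the free factor `F(a,b,c)` inside `X ∗ F(a,b,c)`. -/
def wA : Coprod X (FreeGroup (Fin 3)) := Coprod.inr (FreeGroup.of 0)
/-- The generator `b` of the free factor `F(a,b,c)` inside `X ∗ F(a,b,c)`. -/
def wB : Coprod X (FreeGroup (Fin 3)) := Coprod.inr (FreeGroup.of 1)
/-- The generator `c` of the free factor `F(a,b,c)` inside `X ∗ F(a,b,c)`. -/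
def wC : Coprod X (FreeGroup (Fin 3)) := Coprod.inr (FreeGroup.of 2)

variable {X}

/-- The `r + 3` relators of Miller's witness construction: the three relators
`(a⁻¹ba)(c⁻¹b⁻¹cbc)⁻¹`, `(a⁻²b⁻¹aba²)(c⁻²b⁻¹cbc²)⁻¹`, `(a⁻³[w,b]a³)(c⁻³bc³)⁻¹`
(with `[w,b] = w⁻¹b⁻¹wb`), together with
`(a^{-(3+j)} gⱼ b a^{3+j})(c^{-(3+j)} b c^{3+j})⁻¹` for `j = 1, …, r`. -/
def witnessRels {r : ℕ} (g : Fin r → X) (w : X) : Set (Coprod X (FreeGroup (Fin 3))) :=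
  {(wA X)⁻¹ * wB X * wA X * ((wC X)⁻¹ * (wB X)⁻¹ * wC X * wB X * wC X)⁻¹,
   (wA X ^ 2)⁻¹ * (wB X)⁻¹ * wA X * wB X * wA X ^ 2 *
     ((wC X ^ 2)⁻¹ * (wB X)⁻¹ * wC X * wB X * wC X ^ 2)⁻¹,
   (wA X ^ 3)⁻¹ * ((Coprod.inl w)⁻¹ * (wB X)⁻¹ * Coprod.inl w * wB X) * wA X ^ 3 *
     ((wC X ^ 3)⁻¹ * wB X * wC X ^ 3)⁻¹} ∪
  Set.range (fun j : Fin r =>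
    (wA X ^ (4 + (j : ℕ)))⁻¹ * Coprod.inl (g j) * wB X * wA X ^ (4 + (j : ℕ)) *
      ((wC X ^ (4 + (j : ℕ)))⁻¹ * wB X * wC X ^ (4 + (j : ℕ)))⁻¹)

/-- Miller's witness group `B(X, w)`: the quotient of `X ∗ F(a,b,c)` by the normal
closure of the `r + 3` relators above. -/
abbrev WitnessGroup {r : ℕ} (g : Fin r → X) (w : X) : Type :=
  Coprod X (FreeGroup (Fin 3)) ⧸ Subgroup.normalClosure (witnessRels g w)

/-- The quotient map `X ∗ F(a,b,c) → B(X, w)`. -/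
def witnessMk {r : ℕ} (g : Fin r → X) (w : X) :
    Coprod X (FreeGroup (Fin 3)) →* WitnessGroup g w :=
  QuotientGroup.mk' _

/-- The image of `c` in the witness group `B(X, w)`. -/
def wcB {r : ℕ} (g : Fin r → X) (w : X) : WitnessGroup g w := witnessMk g w (wC X)

end WitnessConstruction


namespace WitnessAux

open Monoid.CoprodI

variable {ι : Type} [DecidableEq ι] {M : ι → Type} [∀ i, Group (M i)]
  [∀ i, DecidableEq (M i)]

/-- The canonical reduced word of an element of a free product. -/
noncomputable def hd (g : CoprodI M) : List (Σ i, M i) :=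
  (Word.equiv (M := M) g).toList

theorem equiv_symm_eq (w : Word M) : (Word.equiv (M := M)).symm w = w.prod := rfl

theorem prod_equiv (g : CoprodI M) : (Word.equiv (M := M) g).prod = g := by
  have := (Word.equiv (M := M)).symm_apply_apply g
  rwa [equiv_symm_eq] at this

theorem hd_one : hd (1 : CoprodI M) = [] := by
  have : Word.equiv (M := M) ((Word.equiv (M := M)).symm Word.empty) = Word.empty :=
    (Word.equiv (M := M)).apply_symm_apply _
  rw [equiv_symm_eq, Word.prod_empty] at this
  simp [hd, this]

theorem hd_eq_nil {g : CoprodI M} (h : hd g = []) : g = 1 := by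
  have hw : Word.equiv (M := M) g = Word.empty := by
    apply Word.ext
    simpa [hd] using h
  have := congrArg (Word.equiv (M := M)).symm hw
  rw [Equiv.symm_apply_apply, equiv_symm_eq, Word.prod_empty] at this
  exact this

theorem hd_cons {i : ι} {m : M i} (hm : m ≠ 1) {g : CoprodI M}
    (hg : ∀ p ∈ (hd g).head?, p.1 ≠ i) :
    hd (of m * g) = ⟨i, m⟩ :: hd g := by
  set w := Word.equiv (M := M) g with hw
  have hfst : w.fstIdx ≠ some i := by
    rw [Word.fstIdx_ne_iff]
    intro l hl
    exact (hg l hl).symm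
  have hprod : (Word.cons m w hfst hm).prod = of m * g := by
    rw [Word.prod_cons, prod_equiv]
  have : Word.equiv (M := M) (Word.cons m w hfst hm).prod = Word.cons m w hfst hm := by
    rw [← equiv_symm_eq, Equiv.apply_symm_apply]
  rw [hprod] at this
  simp [hd, this, Word.cons, hw]

theorem exists_decomp {i : ι} {m : M i} {rest : List (Σ i, M i)} {g : CoprodI M}
    (h : hd g = ⟨i, m⟩ :: rest) :
    m ≠ 1 ∧ (∀ p ∈ rest.head?, p.1 ≠ i) ∧ ∃ g' : CoprodI M, hd g' = rest ∧ g = of m * g' := by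
  set w := Word.equiv (M := M) g with hw
  have hlist : w.toList = ⟨i, m⟩ :: rest := h
  have hm : m ≠ 1 := w.ne_one ⟨i, m⟩ (by rw [hlist]; exact List.mem_cons_self)
  have hchain := w.chain_ne
  rw [hlist] at hchain
  obtain ⟨hhead, htail⟩ := List.isChain_cons.mp hchain
  refine ⟨hm, fun p hp => (hhead p hp).symm, ?_⟩
  have hne : ∀ l ∈ rest, Sigma.snd l ≠ 1 := by
    intro l hl
    exact w.ne_one l (by rw [hlist]; exact List.mem_cons_of_mem _ hl)
  set w' : Word M := ⟨rest, hne, htail⟩ with hw'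
  refine ⟨w'.prod, ?_, ?_⟩
  · have : Word.equiv (M := M) w'.prod = w' := by
      rw [← equiv_symm_eq, Equiv.apply_symm_apply]
    show (Word.equiv (M := M) w'.prod).toList = rest
    rw [this]
  · have : g = w.prod := (prod_equiv g).symm
    rw [this]
    simp only [Word.prod, hlist, List.map_cons, List.prod_cons]
    rfl

theorem hd_merge {i : ι} {m m' : M i} {rest : List (Σ i, M i)} {g : CoprodI M}
    (h : hd g = ⟨i, m'⟩ :: rest) (hmm : m * m' ≠ 1) :
    hd (of m * g) = ⟨i, m * m'⟩ :: rest := by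
  obtain ⟨_, hrest, g', hg', rfl⟩ := exists_decomp h
  rw [← mul_assoc, ← MonoidHom.map_mul]
  rw [hd_cons hmm (by rw [hg']; exact hrest), hg']

theorem hd_cancel {i : ι} {m m' : M i} {rest : List (Σ i, M i)} {g : CoprodI M}
    (h : hd g = ⟨i, m'⟩ :: rest) (hmm : m * m' = 1) :
    hd (of m * g) = rest := by
  obtain ⟨_, hrest, g', hg', rfl⟩ := exists_decomp h
  rw [← mul_assoc, ← MonoidHom.map_mul, hmm, MonoidHom.map_one, one_mul, hg']

open Pointwise

/-- Ping-pong data for a single element `s` of a free product, relative to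
a "translation" index `τ`. -/
structure PP (τ : ι) (s : CoprodI M) : Type where
  Sp : Set (CoprodI M)
  Sn : Set (CoprodI M)
  head_p : ∀ g ∈ Sp, ∀ p ∈ (hd g).head?, p.1 ≠ τ
  head_n : ∀ g ∈ Sn, ∀ p ∈ (hd g).head?, p.1 ≠ τ
  disj : ∀ g, g ∈ Sp → g ∈ Sn → False
  nonempty : Sp.Nonempty
  mulp : ∀ g, g ∉ Sn → s * g ∈ Sp
  muln : ∀ g, g ∉ Sp → s⁻¹ * g ∈ Sn

theorem tpow_head {τ : ι} {t : M τ} (ht : ∀ z : ℤ, z ≠ 0 → t ^ z ≠ 1)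
    {e : ℤ} (he : e ≠ 0) {g : CoprodI M} (hg : ∀ p ∈ (hd g).head?, p.1 ≠ τ) :
    hd ((of t) ^ e * g) = ⟨τ, t ^ e⟩ :: hd g := by
  rw [← map_zpow]
  exact hd_cons (ht e he) hg

/-- The conjugation ping-pong lemma: if `s k` are elements of a free product
admitting ping-pong data whose sets avoid words starting at the index `τ`, and
`n : K → ℤ` is injective, then the elements `t^(-n k) * s k * t^(n k)` freely
generate a free subgroup. -/
theorem conj_ping_pong {K : Type} [Nontrivial K]
    {τ : ι} {t : M τ} (ht : ∀ z : ℤ, z ≠ 0 → t ^ z ≠ 1)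
    {n : K → ℤ} (hn : Function.Injective n)
    {s : K → CoprodI M} (pp : ∀ k, PP τ (s k)) :
    Function.Injective
      (FreeGroup.lift (fun k => (of t) ^ (- n k) * s k * (of t) ^ (n k))) := by
  classical
  set a : K → CoprodI M := fun k => (of t) ^ (- n k) * s k * (of t) ^ (n k) with ha
  set X : K → Set (CoprodI M) := fun k => (of t) ^ (- n k) • (pp k).Sp with hX
  set Y : K → Set (CoprodI M) := fun k => (of t) ^ (- n k) • (pp k).Sn with hY
  -- membership characterisation
  have memX : ∀ k x, x ∈ X k ↔ (of t) ^ (n k) * x ∈ (pp k).Sp := by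
    intro k x
    rw [hX]
    rw [Set.mem_smul_set_iff_inv_smul_mem]
    simp [smul_eq_mul, zpow_neg]
  have memY : ∀ k x, x ∈ Y k ↔ (of t) ^ (n k) * x ∈ (pp k).Sn := by
    intro k x
    rw [hY]
    rw [Set.mem_smul_set_iff_inv_smul_mem]
    simp [smul_eq_mul, zpow_neg]
  -- a head-based disjointness tool
  have key : ∀ (k l : K) (x : CoprodI M)
      (S1 : Set (CoprodI M)) (S2 : Set (CoprodI M)),
      k ≠ l →
      (∀ g ∈ S1, ∀ p ∈ (hd g).head?, p.1 ≠ τ) →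
      (∀ g ∈ S2, ∀ p ∈ (hd g).head?, p.1 ≠ τ) →
      (of t) ^ (n k) * x ∈ S1 → (of t) ^ (n l) * x ∈ S2 → False := by
    intro k l x S1 S2 hkl h1 h2 hx1 hx2
    set g1 := (of t) ^ (n k) * x with hg1
    set g2 := (of t) ^ (n l) * x with hg2
    have hdiff : g1 = (of t) ^ (n k - n l) * g2 := by
      rw [hg1, hg2, ← mul_assoc, ← zpow_add, sub_add_cancel]
    have hne : n k - n l ≠ 0 := sub_ne_zero.mpr (fun h => hkl (hn h))
    have : hd g1 = ⟨τ, t ^ (n k - n l)⟩ :: hd g2 := by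
      rw [hdiff]
      exact tpow_head ht hne (h2 _ hx2)
    have := h1 _ hx1 ⟨τ, t ^ (n k - n l)⟩ (by rw [this]; rfl)
    exact this rfl
  apply FreeGroup.injective_lift_of_ping_pong a X Y
  · intro k
    obtain ⟨x, hx⟩ := (pp k).nonempty
    exact ⟨(of t) ^ (- n k) * x, (memX k _).2 (by
      rw [← mul_assoc, ← zpow_add, add_neg_cancel, zpow_zero, one_mul]; exact hx)⟩
  · intro k l hkl
    simp only [Function.onFun]
    rw [Set.disjoint_left]
    intro x hxk hxl
    exact key k l x _ _ hkl (pp k).head_p (pp l).head_p ((memX k x).1 hxk) ((memX l x).1 hxl)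
  · intro k l hkl
    simp only [Function.onFun]
    rw [Set.disjoint_left]
    intro x hxk hxl
    exact key k l x _ _ hkl (pp k).head_n (pp l).head_n ((memY k x).1 hxk) ((memY l x).1 hxl)
  · intro k l
    rw [Set.disjoint_left]
    intro x hxk hxl
    by_cases hkl : k = l
    · subst hkl
      exact (pp k).disj _ ((memX k x).1 hxk) ((memY k x).1 hxl)
    · exact key k l x _ _ hkl (pp k).head_p (pp l).head_n ((memX k x).1 hxk) ((memY l x).1 hxl)
  · intro k x hx
    obtain ⟨z, hz, rfl⟩ := hx
    have hz' : (of t) ^ (n k) * z ∉ (pp k).Sn := by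
      intro hmem
      exact hz ((memY k z).2 hmem)
    have := (pp k).mulp _ hz'
    rw [memX]
    have harr : (of t) ^ (n k) * (a k • z) = s k * ((of t) ^ (n k) * z) := by
      rw [ha]
      simp only [smul_eq_mul]
      group
    rw [harr]
    exact this
  · intro k x hx
    obtain ⟨z, hz, rfl⟩ := hx
    have hz' : (of t) ^ (n k) * z ∉ (pp k).Sp := by
      intro hmem
      exact hz ((memX k z).2 hmem)
    have := (pp k).muln _ hz'
    rw [memY]
    have harr : (of t) ^ (n k) * (a⁻¹ k • z) = (s k)⁻¹ * ((of t) ^ (n k) * z) := by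
      rw [ha]
      simp only [smul_eq_mul, Pi.inv_apply, mul_inv_rev, inv_inv]
      group
    rw [harr]
    exact this



theorem head_ne_of_eq {i j : ι} {m : M j} {r : List (Σ i, M i)} {L : List (Σ i, M i)}
    (h : L = ⟨j, m⟩ :: r) (hij : j ≠ i) : ∀ p ∈ L.head?, p.1 ≠ i := by
  subst h
  intro p hp
  rw [List.head?_cons, Option.mem_some_iff] at hp
  subst hp
  exact hij

theorem head_ne_nil {i : ι} {L : List (Σ i, M i)} (h : L = []) :
    ∀ p ∈ L.head?, p.1 ≠ i := by
  subst h; simp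

theorem hd_of {i : ι} {m : M i} (hm : m ≠ 1) : hd (M := M) (of m) = [⟨i, m⟩] := by
  have := hd_cons (M := M) hm (g := 1) (by simp [hd_one])
  simpa [hd_one] using this

/-! ### Shape A : a single letter -/

section ShapeA

variable {β τ : ι} {m : M β} {P N : Set (M β)}

/-- One-letter membership set. -/
def SA (β : ι) (P : Set (M β)) : Set (CoprodI M) :=
  {g | ∃ mm rest, hd g = ⟨β, mm⟩ :: rest ∧ mm ∈ P}

theorem letter_aux (hmP : m ∈ P) (hmN : m⁻¹ ∈ N) (h1P : (1 : M β) ∉ P)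
    (hp : ∀ x, x ∉ N → m * x ∈ P) :
    ∀ g ∉ SA β N, of m * g ∈ SA β P := by
  intro g hg
  have hm1 : m ≠ 1 := fun h => h1P (h ▸ hmP)
  simp only [SA, Set.mem_setOf_eq, not_exists, not_and] at hg
  rcases hL : hd g with - | ⟨⟨i, mm⟩, rest⟩
  · have h1 : g = 1 := hd_eq_nil hL
    subst h1
    rw [mul_one]
    exact ⟨m, [], hd_of hm1, hmP⟩
  · by_cases hi : i = β
    · subst hi
      have hmmN : mm ∉ N := hg mm rest hL
      have hne : m * mm ≠ 1 := by
        intro h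
        exact hmmN ((inv_eq_of_mul_eq_one_right h) ▸ hmN)
      exact ⟨m * mm, rest, hd_merge hL hne, hp mm hmmN⟩
    · exact ⟨m, hd g, hd_cons hm1 (head_ne_of_eq hL hi), hmP⟩

/-- Ping-pong data for a single letter `of m` with `m` in a "positive" set `P`. -/
def ppLetter (hβτ : β ≠ τ) (hmP : m ∈ P) (hmN : m⁻¹ ∈ N)
    (hPN : ∀ x, x ∈ P → x ∈ N → False)
    (h1P : (1 : M β) ∉ P) (h1N : (1 : M β) ∉ N)
    (hp : ∀ x, x ∉ N → m * x ∈ P)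
    (hn : ∀ x, x ∉ P → m⁻¹ * x ∈ N) :
    PP τ (of m) where
  Sp := SA β P
  Sn := SA β N
  head_p := by
    rintro g ⟨mm, rest, hL, -⟩ p hp
    rw [hL, List.head?_cons, Option.mem_some_iff] at hp
    subst hp
    exact hβτ
  head_n := by
    rintro g ⟨mm, rest, hL, -⟩ p hp
    rw [hL, List.head?_cons, Option.mem_some_iff] at hp
    subst hp
    exact hβτ
  disj := by
    rintro g ⟨mm, rest, hL, hmm⟩ ⟨mm', rest', hL', hmm'⟩
    rw [hL] at hL'
    injection hL' with h1 h2
    cases h1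
    exact hPN mm hmm hmm'
  nonempty := by
    refine ⟨of m, m, [], ?_, hmP⟩
    exact hd_of fun h => h1P (h ▸ hmP)
  mulp := fun g hg => letter_aux hmP hmN h1P hp g hg
  muln := fun g hg => by
    have := letter_aux (m := m⁻¹) (P := N) (N := P) hmN (by rw [inv_inv]; exact hmP) h1N hn g hg
    rwa [map_inv] at this

end ShapeA

/-! ### Shape B : `m⁻¹ u m` with `m : M β`, `u : M γ` -/

section ShapeB

variable {β γ τ : ι} {m : M β} {u : M γ} {Pβ Nβ : Set (M β)} {Pγ Nγ : Set (M γ)}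

/-- Two-letter-prefix membership set. -/
def SB (β γ : ι) (Nβ : Set (M β)) (Pγ : Set (M γ)) : Set (CoprodI M) :=
  {g | ∃ mm uu rest, hd g = ⟨β, mm⟩ :: ⟨γ, uu⟩ :: rest ∧ mm ∈ Nβ ∧ uu ∈ Pγ}

theorem bab_aux (hβγ : β ≠ γ)
    (hmP : m ∈ Pβ) (hmN : m⁻¹ ∈ Nβ) (h1P : (1 : M β) ∉ Pβ) (h1N : (1 : M β) ∉ Nβ)
    (huP : u ∈ Pγ) (h1Pγ : (1 : M γ) ∉ Pγ)
    (hpγ : ∀ x, x ∉ Nγ → u * x ∈ Pγ) :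
    ∀ g ∉ SB β γ Nβ Nγ, of m⁻¹ * (of u * (of m * g)) ∈ SB β γ Nβ Pγ := by
  intro g hg
  have hm1 : m ≠ 1 := fun h => h1P (h ▸ hmP)
  have hminv1 : m⁻¹ ≠ 1 := fun h => h1N (h ▸ hmN)
  have hu1 : u ≠ 1 := fun h => h1Pγ (h ▸ huP)
  simp only [SB, Set.mem_setOf_eq, not_exists, not_and] at hg
  rcases hL : hd g with - | ⟨⟨i, mm⟩, rest⟩
  · have h1 : g = 1 := hd_eq_nil hL
    subst h1
    have e1 : hd (M := M) (of m * (1 : CoprodI M)) = [⟨β, m⟩] := by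
      rw [mul_one]; exact hd_of hm1
    have e2 : hd (of u * (of m * (1 : CoprodI M))) = [⟨γ, u⟩, ⟨β, m⟩] := by
      rw [hd_cons hu1 (head_ne_of_eq e1 hβγ), e1]
    have e3 : hd (of m⁻¹ * (of u * (of m * (1 : CoprodI M)))) =
        [⟨β, m⁻¹⟩, ⟨γ, u⟩, ⟨β, m⟩] := by
      rw [hd_cons hminv1 (head_ne_of_eq e2 (Ne.symm hβγ)), e2]
    exact ⟨m⁻¹, u, _, e3, hmN, huP⟩
  · by_cases hi : i = β
    · obtain rfl := hi.symm
      by_cases hc : m * mm = 1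
      · -- cancellation at β
        have hmm : mm ∈ Nβ := (inv_eq_of_mul_eq_one_right hc) ▸ hmN
        have e1 : hd (of m * g) = rest := hd_cancel hL hc
        rcases hR : rest with - | ⟨⟨j, uu⟩, rest₂⟩
        · have e2 : hd (of u * (of m * g)) = [⟨γ, u⟩] := by
            rw [hd_cons hu1 (by rw [e1]; exact head_ne_nil hR), e1, hR]
          have e3 : hd (of m⁻¹ * (of u * (of m * g))) = [⟨β, m⁻¹⟩, ⟨γ, u⟩] := by
            rw [hd_cons hminv1 (head_ne_of_eq e2 (Ne.symm hβγ)), e2]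
          exact ⟨m⁻¹, u, _, e3, hmN, huP⟩
        · subst hR
          by_cases hj : j = γ
          · obtain rfl := hj.symm
            have huuN : uu ∉ Nγ := hg mm uu rest₂ hL hmm
            have huuP : u * uu ∈ Pγ := hpγ uu huuN
            have hneu : u * uu ≠ 1 := fun h => h1Pγ (h ▸ huuP)
            have e2 : hd (of u * (of m * g)) = ⟨γ, u * uu⟩ :: rest₂ :=
              hd_merge e1 hneu
            have e3 : hd (of m⁻¹ * (of u * (of m * g))) =
                ⟨β, m⁻¹⟩ :: ⟨γ, u * uu⟩ :: rest₂ := by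
              rw [hd_cons hminv1 (head_ne_of_eq e2 (Ne.symm hβγ)), e2]
            exact ⟨m⁻¹, u * uu, rest₂, e3, hmN, huuP⟩
          · have e2 : hd (of u * (of m * g)) = ⟨γ, u⟩ :: ⟨j, uu⟩ :: rest₂ := by
              rw [hd_cons hu1 (by rw [e1]; exact head_ne_of_eq rfl hj), e1]
            have e3 : hd (of m⁻¹ * (of u * (of m * g))) =
                ⟨β, m⁻¹⟩ :: ⟨γ, u⟩ :: ⟨j, uu⟩ :: rest₂ := by
              rw [hd_cons hminv1 (head_ne_of_eq e2 (Ne.symm hβγ)), e2]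
            exact ⟨m⁻¹, u, _, e3, hmN, huP⟩
      · -- merge at β
        have e1 : hd (of m * g) = ⟨β, m * mm⟩ :: rest := hd_merge hL hc
        have e2 : hd (of u * (of m * g)) = ⟨γ, u⟩ :: ⟨β, m * mm⟩ :: rest := by
          rw [hd_cons hu1 (head_ne_of_eq e1 hβγ), e1]
        have e3 : hd (of m⁻¹ * (of u * (of m * g))) =
            ⟨β, m⁻¹⟩ :: ⟨γ, u⟩ :: ⟨β, m * mm⟩ :: rest := by
          rw [hd_cons hminv1 (head_ne_of_eq e2 (Ne.symm hβγ)), e2]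
        exact ⟨m⁻¹, u, _, e3, hmN, huP⟩
    · -- head at a different index
      have e1 : hd (of m * g) = ⟨β, m⟩ :: ⟨i, mm⟩ :: rest := by
        rw [hd_cons hm1 (head_ne_of_eq hL hi), hL]
      have e2 : hd (of u * (of m * g)) = ⟨γ, u⟩ :: ⟨β, m⟩ :: ⟨i, mm⟩ :: rest := by
        rw [hd_cons hu1 (head_ne_of_eq e1 hβγ), e1]
      have e3 : hd (of m⁻¹ * (of u * (of m * g))) =
          ⟨β, m⁻¹⟩ :: ⟨γ, u⟩ :: ⟨β, m⟩ :: ⟨i, mm⟩ :: rest := by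
        rw [hd_cons hminv1 (head_ne_of_eq e2 (Ne.symm hβγ)), e2]
      exact ⟨m⁻¹, u, _, e3, hmN, huP⟩

/-- Ping-pong data for `of m⁻¹ * of u * of m`. -/
def ppBab (hβτ : β ≠ τ) (hβγ : β ≠ γ)
    (hmP : m ∈ Pβ) (hmN : m⁻¹ ∈ Nβ) (h1P : (1 : M β) ∉ Pβ) (h1N : (1 : M β) ∉ Nβ)
    (huP : u ∈ Pγ) (huN : u⁻¹ ∈ Nγ) (h1Pγ : (1 : M γ) ∉ Pγ) (h1Nγ : (1 : M γ) ∉ Nγ)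
    (hPNγ : ∀ x, x ∈ Pγ → x ∈ Nγ → False)
    (hpγ : ∀ x, x ∉ Nγ → u * x ∈ Pγ)
    (hnγ : ∀ x, x ∉ Pγ → u⁻¹ * x ∈ Nγ) :
    PP τ (of m⁻¹ * of u * of m) where
  Sp := SB β γ Nβ Pγ
  Sn := SB β γ Nβ Nγ
  head_p := by
    rintro g ⟨mm, uu, rest, hL, -, -⟩ p hp
    rw [hL, List.head?_cons, Option.mem_some_iff] at hp
    subst hp
    exact hβτ
  head_n := by
    rintro g ⟨mm, uu, rest, hL, -, -⟩ p hp
    rw [hL, List.head?_cons, Option.mem_some_iff] at hp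
    subst hp
    exact hβτ
  disj := by
    rintro g ⟨mm, uu, rest, hL, -, huu⟩ ⟨mm', uu', rest', hL', -, huu'⟩
    rw [hL] at hL'
    injection hL' with h1 h2
    injection h2 with h3 h4
    cases h3
    exact hPNγ uu huu huu'
  nonempty := by
    have h1 : (1 : CoprodI M) ∉ SB β γ Nβ Nγ := by
      rintro ⟨mm, uu, rest, hL, -, -⟩
      rw [hd_one] at hL
      cases hL
    exact ⟨_, bab_aux hβγ hmP hmN h1P h1N huP h1Pγ hpγ 1 h1⟩
  mulp := by
    intro g hg
    have := bab_aux hβγ hmP hmN h1P h1N huP h1Pγ hpγ g hg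
    have heq : of m⁻¹ * of u * of m * g = of m⁻¹ * (of u * (of m * g)) := by
      simp [mul_assoc]
    rwa [heq]
  muln := by
    intro g hg
    have := bab_aux (u := u⁻¹) (Pγ := Nγ) (Nγ := Pγ) hβγ hmP hmN h1P h1N huN h1Nγ hnγ g hg
    have heq : (of m⁻¹ * of u * of m)⁻¹ * g = of m⁻¹ * (of u⁻¹ * (of m * g)) := by
      simp [mul_inv_rev, ← map_inv, inv_inv, mul_assoc]
    rwa [heq]

end ShapeB

/-! ### Shape C : `x m⁻¹ x⁻¹ m` with `x : M χ`, `m : M β` -/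

section ShapeC

variable {χ β τ : ι} {x : M χ} {m : M β} {Pβ Nβ : Set (M β)}

/-- Mixed two-letter-prefix membership set, with prescribed first letter. -/
def SC (χ β : ι) (x : M χ) (Nβ : Set (M β)) : Set (CoprodI M) :=
  {g | ∃ mm rest, hd g = ⟨χ, x⟩ :: ⟨β, mm⟩ :: rest ∧ mm ∈ Nβ}

/-- Ping-pong data for the "commutator" core `of x * of m⁻¹ * of x⁻¹ * of m`. -/
def ppComm (hχβ : χ ≠ β) (hχτ : χ ≠ τ) (hβτ : β ≠ τ) (hx : x ≠ 1)
    (hmP : m ∈ Pβ) (hmN : m⁻¹ ∈ Nβ) (h1P : (1 : M β) ∉ Pβ) (h1N : (1 : M β) ∉ Nβ)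
    (hPN : ∀ y, y ∈ Pβ → y ∈ Nβ → False)
    (hpβ : ∀ y, y ∉ Nβ → m * y ∈ Pβ)
    (hnβ : ∀ y, y ∉ Pβ → m⁻¹ * y ∈ Nβ) :
    PP τ (of x * of m⁻¹ * of x⁻¹ * of m) where
  Sp := SC χ β x Nβ
  Sn := SA β Nβ
  head_p := by
    rintro g ⟨mm, rest, hL, -⟩ p hp
    rw [hL, List.head?_cons, Option.mem_some_iff] at hp
    subst hp
    exact hχτ
  head_n := by
    rintro g ⟨mm, rest, hL, -⟩ p hp
    rw [hL, List.head?_cons, Option.mem_some_iff] at hp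
    subst hp
    exact hβτ
  disj := by
    rintro g ⟨mm, rest, hL, -⟩ ⟨mm', rest', hL', -⟩
    rw [hL] at hL'
    injection hL' with h1 h2
    exact hχβ (congrArg Sigma.fst h1)
  nonempty := by
    have hm1 : m ≠ 1 := fun h => h1P (h ▸ hmP)
    have hminv1 : m⁻¹ ≠ 1 := fun h => h1N (h ▸ hmN)
    have hxinv1 : x⁻¹ ≠ 1 := fun h => hx (by rwa [inv_eq_one] at h)
    have e1 : hd (M := M) (of m : CoprodI M) = [⟨β, m⟩] := hd_of hm1
    have e2 : hd (of x⁻¹ * of m) = [⟨χ, x⁻¹⟩, ⟨β, m⟩] := by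
      rw [hd_cons hxinv1 (head_ne_of_eq e1 (Ne.symm hχβ)), e1]
    have e3 : hd (of m⁻¹ * (of x⁻¹ * of m)) = [⟨β, m⁻¹⟩, ⟨χ, x⁻¹⟩, ⟨β, m⟩] := by
      rw [hd_cons hminv1 (head_ne_of_eq e2 hχβ), e2]
    have e4 : hd (of x * (of m⁻¹ * (of x⁻¹ * of m))) =
        [⟨χ, x⟩, ⟨β, m⁻¹⟩, ⟨χ, x⁻¹⟩, ⟨β, m⟩] := by
      rw [hd_cons hx (head_ne_of_eq e3 (Ne.symm hχβ)), e3]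
    refine ⟨of x * (of m⁻¹ * (of x⁻¹ * of m)), m⁻¹, _, e4, hmN⟩
  mulp := by
    intro g hg
    have hm1 : m ≠ 1 := fun h => h1P (h ▸ hmP)
    have hminv1 : m⁻¹ ≠ 1 := fun h => h1N (h ▸ hmN)
    have hxinv1 : x⁻¹ ≠ 1 := fun h => hx (by rwa [inv_eq_one] at h)
    simp only [SA, Set.mem_setOf_eq, not_exists, not_and] at hg
    have heq : of x * of m⁻¹ * of x⁻¹ * of m * g =
        of x * (of m⁻¹ * (of x⁻¹ * (of m * g))) := by
      simp [mul_assoc]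
    rw [heq]
    rcases hL : hd g with - | ⟨⟨i, mm⟩, rest⟩
    · have h1 : g = 1 := hd_eq_nil hL
      subst h1
      have e1 : hd (M := M) (of m * (1 : CoprodI M)) = [⟨β, m⟩] := by
        rw [mul_one]; exact hd_of hm1
      have e2 : hd (of x⁻¹ * (of m * (1 : CoprodI M))) = [⟨χ, x⁻¹⟩, ⟨β, m⟩] := by
        rw [hd_cons hxinv1 (head_ne_of_eq e1 (Ne.symm hχβ)), e1]
      have e3 : hd (of m⁻¹ * (of x⁻¹ * (of m * (1 : CoprodI M)))) =
          [⟨β, m⁻¹⟩, ⟨χ, x⁻¹⟩, ⟨β, m⟩] := by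
        rw [hd_cons hminv1 (head_ne_of_eq e2 hχβ), e2]
      have e4 : hd (of x * (of m⁻¹ * (of x⁻¹ * (of m * (1 : CoprodI M))))) =
          [⟨χ, x⟩, ⟨β, m⁻¹⟩, ⟨χ, x⁻¹⟩, ⟨β, m⟩] := by
        rw [hd_cons hx (head_ne_of_eq e3 (Ne.symm hχβ)), e3]
      exact ⟨m⁻¹, _, e4, hmN⟩
    · by_cases hi : i = β
      · obtain rfl := hi.symm
        have hmm : mm ∉ Nβ := hg mm rest hL
        have hP : m * mm ∈ Pβ := hpβ mm hmm
        have hne : m * mm ≠ 1 := fun h => h1P (h ▸ hP)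
        have e1 : hd (of m * g) = ⟨β, m * mm⟩ :: rest := hd_merge hL hne
        have e2 : hd (of x⁻¹ * (of m * g)) = ⟨χ, x⁻¹⟩ :: ⟨β, m * mm⟩ :: rest := by
          rw [hd_cons hxinv1 (head_ne_of_eq e1 (Ne.symm hχβ)), e1]
        have e3 : hd (of m⁻¹ * (of x⁻¹ * (of m * g))) =
            ⟨β, m⁻¹⟩ :: ⟨χ, x⁻¹⟩ :: ⟨β, m * mm⟩ :: rest := by
          rw [hd_cons hminv1 (head_ne_of_eq e2 hχβ), e2]
        have e4 : hd (of x * (of m⁻¹ * (of x⁻¹ * (of m * g)))) =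
            ⟨χ, x⟩ :: ⟨β, m⁻¹⟩ :: ⟨χ, x⁻¹⟩ :: ⟨β, m * mm⟩ :: rest := by
          rw [hd_cons hx (head_ne_of_eq e3 (Ne.symm hχβ)), e3]
        exact ⟨m⁻¹, _, e4, hmN⟩
      · have e1 : hd (of m * g) = ⟨β, m⟩ :: ⟨i, mm⟩ :: rest := by
          rw [hd_cons hm1 (head_ne_of_eq hL hi), hL]
        have e2 : hd (of x⁻¹ * (of m * g)) = ⟨χ, x⁻¹⟩ :: ⟨β, m⟩ :: ⟨i, mm⟩ :: rest := by
          rw [hd_cons hxinv1 (head_ne_of_eq e1 (Ne.symm hχβ)), e1]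
        have e3 : hd (of m⁻¹ * (of x⁻¹ * (of m * g))) =
            ⟨β, m⁻¹⟩ :: ⟨χ, x⁻¹⟩ :: ⟨β, m⟩ :: ⟨i, mm⟩ :: rest := by
          rw [hd_cons hminv1 (head_ne_of_eq e2 hχβ), e2]
        have e4 : hd (of x * (of m⁻¹ * (of x⁻¹ * (of m * g)))) =
            ⟨χ, x⟩ :: ⟨β, m⁻¹⟩ :: ⟨χ, x⁻¹⟩ :: ⟨β, m⟩ :: ⟨i, mm⟩ :: rest := by
          rw [hd_cons hx (head_ne_of_eq e3 (Ne.symm hχβ)), e3]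
        exact ⟨m⁻¹, _, e4, hmN⟩
  muln := by
    intro g hg
    have hm1 : m ≠ 1 := fun h => h1P (h ▸ hmP)
    have hminv1 : m⁻¹ ≠ 1 := fun h => h1N (h ▸ hmN)
    have hxinv1 : x⁻¹ ≠ 1 := fun h => hx (by rwa [inv_eq_one] at h)
    simp only [SC, Set.mem_setOf_eq, not_exists, not_and] at hg
    have heq : (of x * of m⁻¹ * of x⁻¹ * of m)⁻¹ * g =
        of m⁻¹ * (of x * (of m * (of x⁻¹ * g))) := by
      simp [mul_inv_rev, ← map_inv, inv_inv, mul_assoc]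
    rw [heq]
    -- helper to conclude once `hd (of x⁻¹ * g)`'s shape lets us finish
    rcases hL : hd g with - | ⟨⟨i, xx⟩, rest⟩
    · have h1 : g = 1 := hd_eq_nil hL
      subst h1
      have e1 : hd (M := M) (of x⁻¹ * (1 : CoprodI M)) = [⟨χ, x⁻¹⟩] := by
        rw [mul_one]; exact hd_of hxinv1
      have e2 : hd (of m * (of x⁻¹ * (1 : CoprodI M))) = [⟨β, m⟩, ⟨χ, x⁻¹⟩] := by
        rw [hd_cons hm1 (head_ne_of_eq e1 hχβ), e1]
      have e3 : hd (of x * (of m * (of x⁻¹ * (1 : CoprodI M)))) =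
          [⟨χ, x⟩, ⟨β, m⟩, ⟨χ, x⁻¹⟩] := by
        rw [hd_cons hx (head_ne_of_eq e2 (Ne.symm hχβ)), e2]
      have e4 : hd (of m⁻¹ * (of x * (of m * (of x⁻¹ * (1 : CoprodI M))))) =
          [⟨β, m⁻¹⟩, ⟨χ, x⟩, ⟨β, m⟩, ⟨χ, x⁻¹⟩] := by
        rw [hd_cons hminv1 (head_ne_of_eq e3 hχβ), e3]
      exact ⟨m⁻¹, _, e4, hmN⟩
    · by_cases hi : i = χ
      · obtain rfl := hi.symm
        by_cases hc : x⁻¹ * xx = 1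
        · -- cancellation at χ ; then look at `rest`
          have e1 : hd (of x⁻¹ * g) = rest := hd_cancel hL hc
          have hxxx : xx = x := by
            have := inv_eq_of_mul_eq_one_right hc
            rw [← this, inv_inv]
          rcases hR : rest with - | ⟨⟨j, yy⟩, rest₂⟩
          · have e2 : hd (of m * (of x⁻¹ * g)) = [⟨β, m⟩] := by
              rw [hd_cons hm1 (by rw [e1]; exact head_ne_nil hR), e1, hR]
            have e3 : hd (of x * (of m * (of x⁻¹ * g))) = [⟨χ, x⟩, ⟨β, m⟩] := by
              rw [hd_cons hx (head_ne_of_eq e2 (Ne.symm hχβ)), e2]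
            have e4 : hd (of m⁻¹ * (of x * (of m * (of x⁻¹ * g)))) =
                [⟨β, m⁻¹⟩, ⟨χ, x⟩, ⟨β, m⟩] := by
              rw [hd_cons hminv1 (head_ne_of_eq e3 hχβ), e3]
            exact ⟨m⁻¹, _, e4, hmN⟩
          · subst hR
            by_cases hj : j = β
            · obtain rfl := hj.symm
              have hyy : yy ∉ Nβ := by
                intro hmem
                exact hg yy rest₂ (by rw [hL, hxxx]) hmem
              have hP : m * yy ∈ Pβ := hpβ yy hyy
              have hne : m * yy ≠ 1 := fun h => h1P (h ▸ hP)
              have e2 : hd (of m * (of x⁻¹ * g)) = ⟨β, m * yy⟩ :: rest₂ :=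
                hd_merge e1 hne
              have e3 : hd (of x * (of m * (of x⁻¹ * g))) =
                  ⟨χ, x⟩ :: ⟨β, m * yy⟩ :: rest₂ := by
                rw [hd_cons hx (head_ne_of_eq e2 (Ne.symm hχβ)), e2]
              have e4 : hd (of m⁻¹ * (of x * (of m * (of x⁻¹ * g)))) =
                  ⟨β, m⁻¹⟩ :: ⟨χ, x⟩ :: ⟨β, m * yy⟩ :: rest₂ := by
                rw [hd_cons hminv1 (head_ne_of_eq e3 hχβ), e3]
              exact ⟨m⁻¹, _, e4, hmN⟩
            · have e2 : hd (of m * (of x⁻¹ * g)) = ⟨β, m⟩ :: ⟨j, yy⟩ :: rest₂ := by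
                rw [hd_cons hm1 (by rw [e1]; exact head_ne_of_eq rfl hj), e1]
              have e3 : hd (of x * (of m * (of x⁻¹ * g))) =
                  ⟨χ, x⟩ :: ⟨β, m⟩ :: ⟨j, yy⟩ :: rest₂ := by
                rw [hd_cons hx (head_ne_of_eq e2 (Ne.symm hχβ)), e2]
              have e4 : hd (of m⁻¹ * (of x * (of m * (of x⁻¹ * g)))) =
                  ⟨β, m⁻¹⟩ :: ⟨χ, x⟩ :: ⟨β, m⟩ :: ⟨j, yy⟩ :: rest₂ := by
                rw [hd_cons hminv1 (head_ne_of_eq e3 hχβ), e3]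
              exact ⟨m⁻¹, _, e4, hmN⟩
        · -- merge at χ
          have e1 : hd (of x⁻¹ * g) = ⟨χ, x⁻¹ * xx⟩ :: rest := hd_merge hL hc
          have e2 : hd (of m * (of x⁻¹ * g)) = ⟨β, m⟩ :: ⟨χ, x⁻¹ * xx⟩ :: rest := by
            rw [hd_cons hm1 (head_ne_of_eq e1 hχβ), e1]
          have e3 : hd (of x * (of m * (of x⁻¹ * g))) =
              ⟨χ, x⟩ :: ⟨β, m⟩ :: ⟨χ, x⁻¹ * xx⟩ :: rest := by
            rw [hd_cons hx (head_ne_of_eq e2 (Ne.symm hχβ)), e2]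
          have e4 : hd (of m⁻¹ * (of x * (of m * (of x⁻¹ * g)))) =
              ⟨β, m⁻¹⟩ :: ⟨χ, x⟩ :: ⟨β, m⟩ :: ⟨χ, x⁻¹ * xx⟩ :: rest := by
            rw [hd_cons hminv1 (head_ne_of_eq e3 hχβ), e3]
          exact ⟨m⁻¹, _, e4, hmN⟩
      · -- head at an index ≠ χ
        have e1 : hd (of x⁻¹ * g) = ⟨χ, x⁻¹⟩ :: ⟨i, xx⟩ :: rest := by
          rw [hd_cons hxinv1 (head_ne_of_eq hL hi), hL]
        have e2 : hd (of m * (of x⁻¹ * g)) = ⟨β, m⟩ :: ⟨χ, x⁻¹⟩ :: ⟨i, xx⟩ :: rest := by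
          rw [hd_cons hm1 (head_ne_of_eq e1 hχβ), e1]
        have e3 : hd (of x * (of m * (of x⁻¹ * g))) =
            ⟨χ, x⟩ :: ⟨β, m⟩ :: ⟨χ, x⁻¹⟩ :: ⟨i, xx⟩ :: rest := by
          rw [hd_cons hx (head_ne_of_eq e2 (Ne.symm hχβ)), e2]
        have e4 : hd (of m⁻¹ * (of x * (of m * (of x⁻¹ * g)))) =
            ⟨β, m⁻¹⟩ :: ⟨χ, x⟩ :: ⟨β, m⟩ :: ⟨χ, x⁻¹⟩ :: ⟨i, xx⟩ :: rest := by
          rw [hd_cons hminv1 (head_ne_of_eq e3 hχβ), e3]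
        exact ⟨m⁻¹, _, e4, hmN⟩

end ShapeC

/-! ### Shape D : `u m` with `u : M χ` a nontrivial letter, `m : M β` -/

section ShapeD

variable {χ β τ : ι} {u : M χ} {m : M β} {Pβ Nβ : Set (M β)}

/-- Ping-pong data for the core `of u * of m` with `u ≠ 1`. -/
def ppXb (hχβ : χ ≠ β) (hχτ : χ ≠ τ) (hβτ : β ≠ τ) (hu : u ≠ 1)
    (hmP : m ∈ Pβ) (hmN : m⁻¹ ∈ Nβ) (h1P : (1 : M β) ∉ Pβ) (h1N : (1 : M β) ∉ Nβ)
    (hPN : ∀ y, y ∈ Pβ → y ∈ Nβ → False)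
    (hpβ : ∀ y, y ∉ Nβ → m * y ∈ Pβ)
    (hnβ : ∀ y, y ∉ Pβ → m⁻¹ * y ∈ Nβ) :
    PP τ (of u * of m) where
  Sp := SC χ β u Pβ
  Sn := SA β Nβ
  head_p := by
    rintro g ⟨mm, rest, hL, -⟩ p hp
    rw [hL, List.head?_cons, Option.mem_some_iff] at hp
    subst hp
    exact hχτ
  head_n := by
    rintro g ⟨mm, rest, hL, -⟩ p hp
    rw [hL, List.head?_cons, Option.mem_some_iff] at hp
    subst hp
    exact hβτ
  disj := by
    rintro g ⟨mm, rest, hL, -⟩ ⟨mm', rest', hL', -⟩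
    rw [hL] at hL'
    injection hL' with h1 h2
    exact hχβ (congrArg Sigma.fst h1)
  nonempty := by
    have hm1 : m ≠ 1 := fun h => h1P (h ▸ hmP)
    have e1 : hd (M := M) (of m : CoprodI M) = [⟨β, m⟩] := hd_of hm1
    have e2 : hd (of u * of m) = [⟨χ, u⟩, ⟨β, m⟩] := by
      rw [hd_cons hu (head_ne_of_eq e1 (Ne.symm hχβ)), e1]
    exact ⟨of u * of m, m, _, e2, hmP⟩
  mulp := by
    intro g hg
    have hm1 : m ≠ 1 := fun h => h1P (h ▸ hmP)
    simp only [SA, Set.mem_setOf_eq, not_exists, not_and] at hg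
    have heq : of u * of m * g = of u * (of m * g) := by
      simp [mul_assoc]
    rw [heq]
    rcases hL : hd g with - | ⟨⟨i, mm⟩, rest⟩
    · have h1 : g = 1 := hd_eq_nil hL
      subst h1
      have e1 : hd (M := M) (of m * (1 : CoprodI M)) = [⟨β, m⟩] := by
        rw [mul_one]; exact hd_of hm1
      have e2 : hd (of u * (of m * (1 : CoprodI M))) = [⟨χ, u⟩, ⟨β, m⟩] := by
        rw [hd_cons hu (head_ne_of_eq e1 (Ne.symm hχβ)), e1]
      exact ⟨m, _, e2, hmP⟩
    · by_cases hi : i = β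
      · obtain rfl := hi.symm
        have hmm : mm ∉ Nβ := hg mm rest hL
        have hP : m * mm ∈ Pβ := hpβ mm hmm
        have hne : m * mm ≠ 1 := fun h => h1P (h ▸ hP)
        have e1 : hd (of m * g) = ⟨β, m * mm⟩ :: rest := hd_merge hL hne
        have e2 : hd (of u * (of m * g)) = ⟨χ, u⟩ :: ⟨β, m * mm⟩ :: rest := by
          rw [hd_cons hu (head_ne_of_eq e1 (Ne.symm hχβ)), e1]
        exact ⟨m * mm, _, e2, hP⟩
      · have e1 : hd (of m * g) = ⟨β, m⟩ :: ⟨i, mm⟩ :: rest := by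
          rw [hd_cons hm1 (head_ne_of_eq hL hi), hL]
        have e2 : hd (of u * (of m * g)) = ⟨χ, u⟩ :: ⟨β, m⟩ :: ⟨i, mm⟩ :: rest := by
          rw [hd_cons hu (head_ne_of_eq e1 (Ne.symm hχβ)), e1]
        exact ⟨m, _, e2, hmP⟩
  muln := by
    intro g hg
    have hminv1 : m⁻¹ ≠ 1 := fun h => h1N (h ▸ hmN)
    have huinv1 : u⁻¹ ≠ 1 := fun h => hu (by rwa [inv_eq_one] at h)
    simp only [SC, Set.mem_setOf_eq, not_exists, not_and] at hg
    have heq : (of u * of m)⁻¹ * g = of m⁻¹ * (of u⁻¹ * g) := by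
      simp [mul_inv_rev, ← map_inv, mul_assoc]
    rw [heq]
    rcases hL : hd g with - | ⟨⟨i, xx⟩, rest⟩
    · have h1 : g = 1 := hd_eq_nil hL
      subst h1
      have e1 : hd (M := M) (of u⁻¹ * (1 : CoprodI M)) = [⟨χ, u⁻¹⟩] := by
        rw [mul_one]; exact hd_of huinv1
      have e2 : hd (of m⁻¹ * (of u⁻¹ * (1 : CoprodI M))) = [⟨β, m⁻¹⟩, ⟨χ, u⁻¹⟩] := by
        rw [hd_cons hminv1 (head_ne_of_eq e1 hχβ), e1]
      exact ⟨m⁻¹, _, e2, hmN⟩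
    · by_cases hi : i = χ
      · obtain rfl := hi.symm
        by_cases hc : u⁻¹ * xx = 1
        · have e1 : hd (of u⁻¹ * g) = rest := hd_cancel hL hc
          have hxxu : xx = u := by
            have := inv_eq_of_mul_eq_one_right hc
            rw [← this, inv_inv]
          rcases hR : rest with - | ⟨⟨j, yy⟩, rest₂⟩
          · have e2 : hd (of m⁻¹ * (of u⁻¹ * g)) = [⟨β, m⁻¹⟩] := by
              rw [hd_cons hminv1 (by rw [e1]; exact head_ne_nil hR), e1, hR]
            exact ⟨m⁻¹, _, e2, hmN⟩
          · subst hR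
            by_cases hj : j = β
            · obtain rfl := hj.symm
              have hyy : yy ∉ Pβ := by
                intro hmem
                exact hg yy rest₂ (by rw [hL, hxxu]) hmem
              have hN : m⁻¹ * yy ∈ Nβ := hnβ yy hyy
              have hne : m⁻¹ * yy ≠ 1 := fun h => h1N (h ▸ hN)
              have e2 : hd (of m⁻¹ * (of u⁻¹ * g)) = ⟨β, m⁻¹ * yy⟩ :: rest₂ :=
                hd_merge e1 hne
              exact ⟨m⁻¹ * yy, _, e2, hN⟩
            · have e2 : hd (of m⁻¹ * (of u⁻¹ * g)) = ⟨β, m⁻¹⟩ :: ⟨j, yy⟩ :: rest₂ := by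
                rw [hd_cons hminv1 (by rw [e1]; exact head_ne_of_eq rfl hj), e1]
              exact ⟨m⁻¹, _, e2, hmN⟩
        · have e1 : hd (of u⁻¹ * g) = ⟨χ, u⁻¹ * xx⟩ :: rest := hd_merge hL hc
          have e2 : hd (of m⁻¹ * (of u⁻¹ * g)) = ⟨β, m⁻¹⟩ :: ⟨χ, u⁻¹ * xx⟩ :: rest := by
            rw [hd_cons hminv1 (head_ne_of_eq e1 hχβ), e1]
          exact ⟨m⁻¹, _, e2, hmN⟩
      · have e1 : hd (of u⁻¹ * g) = ⟨χ, u⁻¹⟩ :: ⟨i, xx⟩ :: rest := by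
          rw [hd_cons huinv1 (head_ne_of_eq hL hi), hL]
        have e2 : hd (of m⁻¹ * (of u⁻¹ * g)) = ⟨β, m⁻¹⟩ :: ⟨χ, u⁻¹⟩ :: ⟨i, xx⟩ :: rest := by
          rw [hd_cons hminv1 (head_ne_of_eq e1 hχβ), e1]
        exact ⟨m⁻¹, _, e2, hmN⟩

end ShapeD
/-! ### ℤ-letter facts -/

/-- The standard generator of `Multiplicative ℤ`. -/
def zg : Multiplicative ℤ := Multiplicative.ofAdd 1

/-- Positive elements of `Multiplicative ℤ`. -/
def Zpos : Set (Multiplicative ℤ) := {x | 0 < Multiplicative.toAdd x}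

/-- Negative elements of `Multiplicative ℤ`. -/
def Zneg : Set (Multiplicative ℤ) := {x | Multiplicative.toAdd x < 0}

theorem zg_zpow_ne_one : ∀ z : ℤ, z ≠ 0 → zg ^ z ≠ 1 := by
  intro z hz h
  apply hz
  have := congrArg Multiplicative.toAdd h
  simpa [zg] using this

theorem zg_memP : zg ∈ Zpos := by simp [Zpos, zg]
theorem zg_inv_memN : zg⁻¹ ∈ Zneg := by simp [Zneg, zg]
theorem one_not_memP : (1 : Multiplicative ℤ) ∉ Zpos := by simp [Zpos]
theorem one_not_memN : (1 : Multiplicative ℤ) ∉ Zneg := by simp [Zneg]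
theorem zPN : ∀ x : Multiplicative ℤ, x ∈ Zpos → x ∈ Zneg → False := by
  intro x h1 h2
  simp only [Zpos, Zneg, Set.mem_setOf_eq] at h1 h2
  omega
theorem zp : ∀ x : Multiplicative ℤ, x ∉ Zneg → zg * x ∈ Zpos := by
  intro x h
  simp only [Zpos, Zneg, Set.mem_setOf_eq, not_lt] at *
  rw [toAdd_mul]
  simp only [zg, toAdd_ofAdd]
  omega
theorem zn : ∀ x : Multiplicative ℤ, x ∉ Zpos → zg⁻¹ * x ∈ Zneg := by
  intro x h
  simp only [Zpos, Zneg, Set.mem_setOf_eq, not_lt] at *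
  rw [toAdd_mul]
  simp only [zg, toAdd_inv, toAdd_ofAdd]
  omega

/-! ### The two factor groups -/

/-- Index type for the factor `X ∗ ⟨a⟩ ∗ ⟨b⟩`. -/
inductive I3 : Type
  | x | a | b
deriving DecidableEq

/-- The family of groups `X, ⟨a⟩, ⟨b⟩`. -/
def M1 (X : Type) [Group X] : I3 → Type
  | .x => X
  | .a => Multiplicative ℤ
  | .b => Multiplicative ℤ

attribute [reducible] M1

instance (X : Type) [Group X] : ∀ i, Group (M1 X i)
  | .x => inferInstanceAs (Group X)
  | .a => inferInstanceAs (Group (Multiplicative ℤ))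
  | .b => inferInstanceAs (Group (Multiplicative ℤ))

/-- The family of groups `⟨b⟩, ⟨c⟩` indexed by `Bool` (`true ↦ b`, `false ↦ c`). -/
abbrev M2 : Bool → Type := fun _ => Multiplicative ℤ

variable (X : Type) [Group X]

/-- `X ∗ ⟨a⟩ ∗ ⟨b⟩`. -/
abbrev G1 := CoprodI (M1 X)

/-- `⟨b⟩ ∗ ⟨c⟩`. -/
abbrev G2 := CoprodI M2

/-- The generator `a` of `G1`. -/
def A1 : G1 X := CoprodI.of (i := I3.a) zg
/-- The generator `b` of `G1`. -/
def B1 : G1 X := CoprodI.of (i := I3.b) zg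
/-- The inclusion of `X` in `G1`. -/
def inX : X →* G1 X := CoprodI.of (M := M1 X) (i := I3.x)
/-- The generator `b` of `G2`. -/
def Bb : G2 := CoprodI.of (i := true) zg
/-- The generator `c` of `G2`. -/
def Cc : G2 := CoprodI.of (i := false) zg

variable {X}
variable {r : ℕ} (gg : Fin r → X) (w : X)

/-- Indexing type for the amalgamated (free) subgroup's basis. -/
abbrev K (r : ℕ) : Type := Option (Fin 3 ⊕ Fin r)

/-- The `a`/`c`-levels of the basis elements. -/
def levN : K r → ℕ
  | none => 0
  | some (Sum.inl k) => (k : ℕ) + 1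
  | some (Sum.inr j) => 4 + (j : ℕ)

theorem levN_injective : Function.Injective (levN (r := r)) := by
  rintro (_ | ⟨k | j⟩) (_ | ⟨k' | j'⟩) h <;>
    simp only [levN] at h <;>
    first
      | rfl
      | (exfalso; omega)
      | (congr 1
         first
           | (exact congrArg Sum.inl (Fin.ext (by omega)))
           | (exact congrArg Sum.inr (Fin.ext (by omega))))

/-- The level function, as an integer. -/
def lev (k : K r) : ℤ := (levN k : ℤ)

theorem lev_injective : Function.Injective (lev (r := r)) := by
  intro a b h
  exact levN_injective (by simpa [lev] using h)

open scoped Classical in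
/-- The cores of the basis elements on the `X ∗ ⟨a⟩ ∗ ⟨b⟩` side. -/
noncomputable def s1 : K r → G1 X
  | none => CoprodI.of (i := I3.b) zg
  | some (Sum.inl ⟨0, _⟩) => CoprodI.of (i := I3.b) zg
  | some (Sum.inl ⟨1, _⟩) =>
      CoprodI.of (i := I3.b) zg⁻¹ * CoprodI.of (i := I3.a) zg * CoprodI.of (i := I3.b) zg
  | some (Sum.inl ⟨_ + 2, _⟩) =>
      CoprodI.of (i := I3.x) w⁻¹ * CoprodI.of (i := I3.b) zg⁻¹ *
        CoprodI.of (i := I3.x) w⁻¹⁻¹ * CoprodI.of (i := I3.b) zg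
  | some (Sum.inr j) =>
      if gg j = 1 then CoprodI.of (i := I3.b) zg
      else CoprodI.of (i := I3.x) (gg j) * CoprodI.of (i := I3.b) zg

/-- The cores of the basis elements on the `⟨b⟩ ∗ ⟨c⟩` side. -/
def s2 : K r → G2
  | some (Sum.inl ⟨0, _⟩) =>
      CoprodI.of (i := true) zg⁻¹ * CoprodI.of (i := false) zg * CoprodI.of (i := true) zg
  | some (Sum.inl ⟨1, _⟩) =>
      CoprodI.of (i := true) zg⁻¹ * CoprodI.of (i := false) zg * CoprodI.of (i := true) zg
  | _ => CoprodI.of (i := true) zg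

/-- The first edge map of the pushout. -/
noncomputable def phi1 : FreeGroup (K r) →* G1 X :=
  FreeGroup.lift (fun k =>
    (CoprodI.of (i := I3.a) zg) ^ (- lev k) * s1 gg w k * (CoprodI.of (i := I3.a) zg) ^ (lev k))

/-- The second edge map of the pushout. -/
noncomputable def phi2 : FreeGroup (K r) →* G2 :=
  FreeGroup.lift (fun k =>
    (CoprodI.of (i := false) zg) ^ (- lev k) * s2 k * (CoprodI.of (i := false) zg) ^ (lev k))

theorem phi1_injective (hw : w ≠ 1) : Function.Injective (phi1 (r := r) gg w) := by
  classical
  apply conj_ping_pong (τ := I3.a) zg_zpow_ne_one lev_injective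
  intro k
  match k with
  | none =>
      exact ppLetter (by simp) zg_memP zg_inv_memN zPN one_not_memP one_not_memN zp zn
  | some (Sum.inl ⟨0, _⟩) =>
      exact ppLetter (by simp) zg_memP zg_inv_memN zPN one_not_memP one_not_memN zp zn
  | some (Sum.inl ⟨1, _⟩) =>
      exact ppBab (by simp) (by simp) zg_memP zg_inv_memN one_not_memP one_not_memN
        zg_memP zg_inv_memN one_not_memP one_not_memN zPN zp zn
  | some (Sum.inl ⟨2, _⟩) =>
      exact ppComm (by simp) (by simp) (by simp) (inv_ne_one.mpr hw)
        zg_memP zg_inv_memN one_not_memP one_not_memN zPN zp zn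
  | some (Sum.inr j) =>
      by_cases hgj : gg j = 1
      · rw [show s1 gg w (some (Sum.inr j)) = CoprodI.of (i := I3.b) zg by
          simp [s1, if_pos hgj]]
        exact ppLetter (by simp) zg_memP zg_inv_memN zPN one_not_memP one_not_memN zp zn
      · rw [show s1 gg w (some (Sum.inr j)) =
          CoprodI.of (i := I3.x) (gg j) * CoprodI.of (i := I3.b) zg by
          simp [s1, if_neg hgj]]
        exact ppXb (by simp) (by simp) (by simp) hgj
          zg_memP zg_inv_memN one_not_memP one_not_memN zPN zp zn

theorem phi2_injective : Function.Injective (phi2 (r := r)) := by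
  classical
  apply conj_ping_pong (τ := false) zg_zpow_ne_one lev_injective
  intro k
  match k with
  | none =>
      exact ppLetter (by simp) zg_memP zg_inv_memN zPN one_not_memP one_not_memN zp zn
  | some (Sum.inl ⟨0, _⟩) =>
      exact ppBab (by simp) (by simp) zg_memP zg_inv_memN one_not_memP one_not_memN
        zg_memP zg_inv_memN one_not_memP one_not_memN zPN zp zn
  | some (Sum.inl ⟨1, _⟩) =>
      exact ppBab (by simp) (by simp) zg_memP zg_inv_memN one_not_memP one_not_memN
        zg_memP zg_inv_memN one_not_memP one_not_memN zPN zp zn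
  | some (Sum.inl ⟨2, _⟩) =>
      exact ppLetter (by simp) zg_memP zg_inv_memN zPN one_not_memP one_not_memN zp zn
  | some (Sum.inr j) =>
      exact ppLetter (by simp) zg_memP zg_inv_memN zPN one_not_memP one_not_memN zp zn
/-! ### The pushout -/

/-- The two vertex groups of the amalgam. -/
def Gf (X : Type) [Group X] : Bool → Type
  | true => G1 X
  | false => G2

attribute [reducible] Gf

instance : ∀ b, Group (Gf X b)
  | true => inferInstanceAs (Group (G1 X))
  | false => inferInstanceAs (Group G2)

/-- The edge maps of the amalgam. -/
noncomputable def phiF : ∀ b, FreeGroup (K r) →* Gf X b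
  | true => phi1 gg w
  | false => phi2

theorem phiF_injective (hw : w ≠ 1) : ∀ b, Function.Injective (phiF (X := X) (r := r) gg w b)
  | true => phi1_injective gg w hw
  | false => phi2_injective

theorem key (h : FreeGroup (K r)) :
    PushoutI.of (φ := phiF gg w) true (phi1 gg w h) =
      PushoutI.of (φ := phiF gg w) false (phi2 h) :=
  (PushoutI.of_apply_eq_base _ true h).trans (PushoutI.of_apply_eq_base _ false h).symm

/-- Images of the three letters `a`, `b`, `c`. -/
noncomputable def fthree : Fin 3 → PushoutI (phiF (X := X) (r := r) gg w)
  | ⟨0, _⟩ => PushoutI.of (φ := phiF gg w) true (CoprodI.of (M := M1 X) (i := I3.a) zg)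
  | ⟨1, _⟩ => PushoutI.of (φ := phiF gg w) true (CoprodI.of (M := M1 X) (i := I3.b) zg)
  | ⟨2, _⟩ => PushoutI.of (φ := phiF gg w) false (CoprodI.of (M := M2) (i := false) zg)

/-- The canonical map from `X ∗ F(a,b,c)` to the amalgam. -/
noncomputable def Fbar : Coprod X (FreeGroup (Fin 3)) →* PushoutI (phiF (X := X) (r := r) gg w) :=
  Coprod.lift ((PushoutI.of (φ := phiF gg w) true).comp (inX X)) (FreeGroup.lift (fthree gg w))

theorem Fbar_wA : Fbar (r := r) gg w (wA X) =
    PushoutI.of (φ := phiF gg w) true (CoprodI.of (M := M1 X) (i := I3.a) zg) := by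
  simp [Fbar, wA, fthree]

theorem Fbar_wB : Fbar (r := r) gg w (wB X) =
    PushoutI.of (φ := phiF gg w) true (CoprodI.of (M := M1 X) (i := I3.b) zg) := by
  simp [Fbar, wB, fthree]

theorem Fbar_wC : Fbar (r := r) gg w (wC X) =
    PushoutI.of (φ := phiF gg w) false (CoprodI.of (M := M2) (i := false) zg) := by
  simp [Fbar, wC, fthree]

theorem Fbar_inl (x : X) : Fbar (r := r) gg w (Coprod.inl x) =
    PushoutI.of (φ := phiF gg w) true (CoprodI.of (M := M1 X) (i := I3.x) x) := by
  simp only [Fbar, Coprod.lift_apply_inl, MonoidHom.comp_apply]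
  rfl

theorem Fbar_rels : ∀ rel ∈ witnessRels gg w, Fbar (r := r) gg w rel = 1 := by
  intro rel hrel
  simp only [witnessRels, Set.mem_union, Set.mem_insert_iff, Set.mem_singleton_iff,
    Set.mem_range] at hrel
  have e0 := key gg w (FreeGroup.of none)
  simp only [phi1, phi2, FreeGroup.lift_apply_of, s1, s2, lev, levN, Nat.cast_zero, neg_zero,
    zpow_zero, one_mul, mul_one] at e0
  rcases hrel with ((rfl | rfl | rfl) | ⟨j, rfl⟩)
  · have e := key gg w (FreeGroup.of (some (Sum.inl ⟨0, by omega⟩)))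
    simp only [phi1, phi2, FreeGroup.lift_apply_of, s1, s2, lev, levN, map_mul, map_inv,
      map_zpow] at e
    simp only [map_mul, map_inv, map_pow, Fbar_wA, Fbar_wB, Fbar_wC]
    rw [mul_inv_eq_one, e0]
    rw [e0] at e
    group at e ⊢
    exact e
  · have e := key gg w (FreeGroup.of (some (Sum.inl ⟨1, by omega⟩)))
    simp only [phi1, phi2, FreeGroup.lift_apply_of, s1, s2, lev, levN, map_mul, map_inv,
      map_zpow] at e
    simp only [map_mul, map_inv, map_pow, Fbar_wA, Fbar_wB, Fbar_wC]
    rw [mul_inv_eq_one, e0]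
    rw [e0] at e
    group at e ⊢
    exact e
  · have e := key gg w (FreeGroup.of (some (Sum.inl ⟨2, by omega⟩)))
    simp only [phi1, phi2, FreeGroup.lift_apply_of, s1, s2, lev, levN, map_mul, map_inv,
      map_zpow] at e
    simp only [map_mul, map_inv, map_pow, Fbar_wA, Fbar_wB, Fbar_wC, Fbar_inl]
    rw [mul_inv_eq_one, e0]
    rw [e0] at e
    group at e ⊢
    exact e
  · have e := key gg w (FreeGroup.of (some (Sum.inr j)))
    simp only [phi1, phi2, FreeGroup.lift_apply_of, s1, s2, lev, levN, map_mul, map_inv,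
      map_zpow] at e
    simp only [map_mul, map_inv, map_pow, Fbar_wA, Fbar_wB, Fbar_wC, Fbar_inl]
    rw [mul_inv_eq_one, e0]
    by_cases hgj : gg j = 1
    · rw [if_pos hgj] at e
      rw [e0] at e
      rw [hgj]
      simp only [map_one, one_mul]
      group at e ⊢
      exact e
    · rw [if_neg hgj] at e
      simp only [map_mul] at e
      rw [e0] at e
      group at e ⊢
      exact e

theorem hard (hw : w ≠ 1) : ¬ Subsingleton (WitnessGroup gg w) := by
  intro hsub
  have hmemC : wC X ∈ Subgroup.normalClosure (witnessRels gg w) := by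
    have h1 : witnessMk gg w (wC X) = 1 := Subsingleton.elim _ _
    exact (QuotientGroup.eq_one_iff _).mp h1
  have hker : Subgroup.normalClosure (witnessRels gg w) ≤ (Fbar (r := r) gg w).ker := by
    apply Subgroup.normalClosure_le_normal
    intro u hu
    exact MonoidHom.mem_ker.mpr (Fbar_rels gg w u hu)
  have h1 : Fbar (r := r) gg w (wC X) = 1 := MonoidHom.mem_ker.mp (hker hmemC)
  rw [Fbar_wC] at h1
  have h2 : (CoprodI.of (M := M2) (i := false) zg) = 1 :=
    PushoutI.of_injective (phiF_injective gg w hw) false (by rw [h1, map_one])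
  have h3 : zg = (1 : Multiplicative ℤ) :=
    CoprodI.of_injective false (h2.trans (map_one _).symm)
  have h4 := congrArg Multiplicative.toAdd h3
  simp [zg] at h4

theorem easy (hgen : Subgroup.closure (Set.range gg) = ⊤) :
    Subsingleton (WitnessGroup gg (1 : X)) := by
  have hmem : ∀ u ∈ witnessRels gg (1 : X), witnessMk gg (1 : X) u = 1 := fun u hu =>
    (QuotientGroup.eq_one_iff u).mpr (Subgroup.subset_normalClosure hu)
  set q := witnessMk gg (1 : X) with hqdef
  have h1 := hmem _ (Set.mem_union_left _ (Set.mem_insert _ _))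
  have h2 := hmem _ (Set.mem_union_left _ (Set.mem_insert_of_mem _ (Set.mem_insert _ _)))
  have h3 := hmem _ (Set.mem_union_left _
    (Set.mem_insert_of_mem _ (Set.mem_insert_of_mem _ rfl)))
  have hj := fun j : Fin r => hmem _ (Set.mem_union_right _ ⟨j, rfl⟩)
  simp only [map_mul, map_inv, map_pow, map_one] at h1 h2 h3 hj
  rw [mul_inv_eq_one] at h1 h2 h3
  -- first: b = 1
  have hB : q (wB X) = 1 := by
    calc q (wB X)
        = q (wC X) ^ 3 * ((q (wC X) ^ 3)⁻¹ * q (wB X) * q (wC X) ^ 3) * (q (wC X) ^ 3)⁻¹ := by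
          group
      _ = 1 := by rw [← h3]; group
  rw [hB] at h1 h2
  -- next : c = 1
  have hC : q (wC X) = 1 := by
    calc q (wC X)
        = (q (wC X))⁻¹ * 1⁻¹ * q (wC X) * 1 * q (wC X) := by group
      _ = 1 := by rw [← h1]; group
  rw [hC] at h2
  -- next : a = 1
  have hA : q (wA X) = 1 := by
    calc q (wA X)
        = (q (wA X) ^ 2)⁻¹ * 1⁻¹ * q (wA X) * 1 * q (wA X) ^ 2 := by group
      _ = (1 ^ 2)⁻¹ * 1⁻¹ * 1 * 1 * 1 ^ 2 := h2
      _ = 1 := by group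
  -- generators of X die
  have hgj : ∀ j : Fin r, q (Coprod.inl (gg j)) = 1 := by
    intro j
    have h := hj j
    rw [mul_inv_eq_one, hA, hB, hC] at h
    calc q (Coprod.inl (gg j))
        = (1 ^ (4 + (j : ℕ)))⁻¹ * q (Coprod.inl (gg j)) * 1 * 1 ^ (4 + (j : ℕ)) := by group
      _ = (1 ^ (4 + (j : ℕ)))⁻¹ * 1 * 1 ^ (4 + (j : ℕ)) := h
      _ = 1 := by group
  -- all of X dies
  have hX1 : ∀ x : X, q (Coprod.inl x) = 1 := by
    intro x
    have hx : x ∈ Subgroup.closure (Set.range gg) := by rw [hgen]; trivial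
    refine Subgroup.closure_induction (p := fun y _ => q (Coprod.inl y) = 1) ?_ ?_ ?_ ?_ hx
    · rintro y ⟨j, rfl⟩
      exact hgj j
    · simp
    · intro y z _ _ hy1 hz1
      rw [map_mul, map_mul, hy1, hz1, one_mul]
    · intro y _ hy1
      rw [map_inv, map_inv, hy1, inv_one]
  -- all of F(a,b,c) dies
  have hF1 : ∀ u : FreeGroup (Fin 3), q (Coprod.inr u) = 1 := by
    intro u
    refine FreeGroup.induction_on u ?_ ?_ ?_ ?_
    · simp
    · intro i
      fin_cases i
      · exact hA
      · exact hB
      · exact hC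
    · intro i hi
      rw [map_inv, map_inv, hi, inv_one]
    · intro x y hx hy
      rw [map_mul, map_mul, hx, hy, one_mul]
  have hall : ∀ m : Coprod X (FreeGroup (Fin 3)), q m = 1 := by
    intro m
    refine Coprod.induction_on m hX1 hF1 ?_
    intro x y hx hy
    rw [map_mul, hx, hy, one_mul]
  constructor
  intro y z
  obtain ⟨my, rfl⟩ := QuotientGroup.mk'_surjective _ y
  obtain ⟨mz, rfl⟩ := QuotientGroup.mk'_surjective _ z
  exact (hall my).trans (hall mz).symm

end WitnessAux


/-- The witness group `B = B(X, w)` is trivial if and only if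
`w = 1` in `X`. -/
theorem witness_trivial_iff_w_eq_one
    (X : Type) [Group X] (r : ℕ) (g : Fin r → X) (w : X)
    (hgen : Subgroup.closure (Set.range g) = ⊤) :
    Subsingleton (WitnessGroup g w) ↔ w = 1 := by
  constructor
  · intro hsub
    by_contra hw
    exact WitnessAux.hard g w hw hsub
  · intro hw
    subst hw
    exact WitnessAux.easy g hgen
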